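/- (Theorem 1) Let μ be a probability measure on ℝ^{N·n_x} absolutely continuous with respect to Lebesgue measure, X̂ ∈ ℝ^{N·n_x} with pairwise distinct blocks, and ν = Σ_π μ(S_π) δ_{π(X̂)}. Then E_μ[min_π ‖X − π(X̂)‖²] = W₂²(μ, ν); i.e., the MOSPA equals the squared 2-Wasserstein distance between μ and the induced discrete measure ν. -/

import Mathlib

/-!
Any coupling of `μ` with a measure carried by the points `π(X̂)` costs at least
`∫ min_π ‖x - π(X̂)‖² dμ`, pointwise. Conversely, sending each nearest-point (Voronoi) cell
`S_π` to its centre `π(X̂)` gives a coupling of `μ` with `ν` whose cost is exactly this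
integral. Its first marginal is `μ` because the cells of distinct centres meet only inside
perpendicular bisector hyperplanes, which are Lebesgue-null, hence `μ`-null.
-/

open MeasureTheory ENNReal

noncomputable section

/-- Stacked state space: `N` blocks each in `ℝ^{n_x}`. -/
abbrev E (N nx : ℕ) := EuclideanSpace ℝ (Fin N × Fin nx)

/-- Block-permutation of a stacked vector. -/
def permute {N nx : ℕ} (π : Equiv.Perm (Fin N)) (X : E N nx) : E N nx :=
  WithLp.toLp 2 (fun p => X (π p.1, p.2))

/-- The region where the permutation `π` gives the nearest permuted copy of `Xhat`. -/
def Spi {N nx : ℕ} (Xhat : E N nx) (π : Equiv.Perm (Fin N)) : Set (E N nx) :=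
  {X | ∀ τ : Equiv.Perm (Fin N), ‖X - permute π Xhat‖ ^ 2 ≤ ‖X - permute τ Xhat‖ ^ 2}

/-- The OSPA distance as an `ℝ≥0∞`-valued quantity. -/
def ospaE {N nx : ℕ} (X Xhat : E N nx) : ℝ≥0∞ :=
  ⨅ π : Equiv.Perm (Fin N), (‖X - permute π Xhat‖₊ : ℝ≥0∞) ^ 2

/-- Squared 2-Wasserstein distance (infimum over couplings of the expected
squared Euclidean distance), as an `ℝ≥0∞`-valued quantity. -/
def W2sq {N nx : ℕ} (μ ν : Measure (E N nx)) : ℝ≥0∞ :=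
  ⨅ (γ : Measure (E N nx × E N nx))
    (_ : γ.map Prod.fst = μ ∧ γ.map Prod.snd = ν),
      ∫⁻ p, (‖p.1 - p.2‖₊ : ℝ≥0∞) ^ 2 ∂γ

open Function

section Voronoi

variable {α ι : Type*} [PseudoMetricSpace α]

def voronoiCell (c : ι → α) (i : ι) : Set α :=
  {x | ∀ j, dist x (c i) ≤ dist x (c j)}

lemma isClosed_voronoiCell (c : ι → α) (i : ι) : IsClosed (voronoiCell c i) := by
  simp only [voronoiCell, Set.ofPred_forall]
  exact isClosed_iInter fun j =>
    isClosed_le (continuous_id.dist continuous_const) (continuous_id.dist continuous_const)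

lemma iUnion_voronoiCell [Finite ι] [Nonempty ι] (c : ι → α) :
    ⋃ i, voronoiCell c i = Set.univ :=
  Set.eq_univ_of_forall fun x => Set.mem_iUnion.2 (Finite.exists_min fun i => dist x (c i))

lemma iInf_edist_sq_eq_of_mem_voronoiCell {c : ι → α} {i : ι} {x : α}
    (hx : x ∈ voronoiCell c i) : ⨅ j, edist x (c j) ^ 2 = edist x (c i) ^ 2 := by
  refine le_antisymm (iInf_le _ i) (le_iInf fun j => ?_)
  rw [edist_dist, edist_dist]
  gcongr
  exact hx j

lemma voronoiCell_inter_subset_perpBisector {V : Type*} [NormedAddCommGroup V]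
    [InnerProductSpace ℝ V] (c : ι → V) (i j : ι) :
    voronoiCell c i ∩ voronoiCell c j ⊆ AffineSubspace.perpBisector (c i) (c j) :=
  fun _ ⟨hi, hj⟩ => AffineSubspace.mem_perpBisector_iff_dist_eq.2 ((hi j).antisymm (hj i))

lemma pairwise_aedisjoint_voronoiCell {V : Type*} [NormedAddCommGroup V]
    [InnerProductSpace ℝ V] [FiniteDimensional ℝ V] [MeasurableSpace V] [BorelSpace V]
    {μ ν : Measure V} [ν.IsAddHaarMeasure] (hμ : μ ≪ ν) {c : ι → V}
    (hc : Function.Injective c) : Pairwise (AEDisjoint μ on (voronoiCell c)) :=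
  fun i j hij => hμ <| measure_mono_null (voronoiCell_inter_subset_perpBisector c i j) <|
    Measure.addHaar_affineSubspace ν _ (by simpa using hc.ne hij)

end Voronoi

section Coupling

variable {α β ι : Type*} [MeasurableSpace α] [MeasurableSpace β]

def cellCoupling (μ : Measure α) (S : ι → Set α) (c : ι → β) : Measure (α × β) :=
  Measure.sum fun i => (μ.restrict (S i)).map fun x => (x, c i)

lemma cellCoupling_map_fst [Countable ι] {μ : Measure α} {S : ι → Set α} (c : ι → β)
    (hcover : ⋃ i, S i = Set.univ) (hd : Pairwise (AEDisjoint μ on S))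
    (hm : ∀ i, NullMeasurableSet (S i) μ) : (cellCoupling μ S c).map Prod.fst = μ := by
  have hfst i : ((μ.restrict (S i)).map fun x => (x, c i)).map Prod.fst = μ.restrict (S i) := by
    rw [Measure.map_map measurable_fst measurable_prodMk_right]
    exact Measure.map_id
  rw [cellCoupling, Measure.map_sum measurable_fst.aemeasurable]
  simp_rw [hfst]
  rw [← Measure.restrict_iUnion_ae hd hm, hcover, Measure.restrict_univ]

lemma cellCoupling_map_snd (μ : Measure α) (S : ι → Set α) (c : ι → β) :
    (cellCoupling μ S c).map Prod.snd = Measure.sum fun i => μ (S i) • Measure.dirac (c i) := by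
  have hsnd i : ((μ.restrict (S i)).map fun x => (x, c i)).map Prod.snd =
      μ (S i) • Measure.dirac (c i) := by
    rw [Measure.map_map measurable_snd measurable_prodMk_right]
    exact (Measure.map_const _ _).trans (by rw [Measure.restrict_apply_univ])
  rw [cellCoupling, Measure.map_sum measurable_snd.aemeasurable]
  simp_rw [hsnd]

lemma lintegral_cellCoupling [MeasurableSingletonClass β] (μ : Measure α) (S : ι → Set α)
    (c : ι → β) (f : α × β → ℝ≥0∞) :
    ∫⁻ p, f p ∂cellCoupling μ S c = ∑' i, ∫⁻ x in S i, f (x, c i) ∂μ := by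
  rw [cellCoupling, lintegral_sum_measure]
  exact tsum_congr fun i => (measurableEmbedding_prod_mk_right (c i)).lintegral_map f

lemma ae_mem_range_of_sum_dirac [MeasurableSingletonClass β] [Countable ι] (w : ι → ℝ≥0∞)
    (c : ι → β) : ∀ᵐ y ∂Measure.sum fun i => w i • Measure.dirac (c i), y ∈ Set.range c :=
  Measure.ae_sum_iff.2 fun i => Measure.ae_smul_measure (by simp [ae_dirac_eq]) _

lemma lintegral_iInf_le_of_ae_mem_range {γ : Measure (α × β)} {c : ι → β}
    {f : α × β → ℝ≥0∞} (hf : Measurable fun x => ⨅ i, f (x, c i))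
    (hγ : ∀ᵐ y ∂γ.map Prod.snd, y ∈ Set.range c) :
    ∫⁻ x, ⨅ i, f (x, c i) ∂γ.map Prod.fst ≤ ∫⁻ p, f p ∂γ := by
  rw [lintegral_map hf measurable_fst]
  refine lintegral_mono_ae ?_
  filter_upwards [ae_of_ae_map measurable_snd.aemeasurable hγ] with ⟨x, y⟩ ⟨i, hi⟩
  subst hi
  exact iInf_le _ i

end Coupling

theorem lintegral_iInf_edist_sq_eq_iInf_coupling {α ι : Type*} [MetricSpace α]
    [MeasurableSpace α] [BorelSpace α] [Fintype ι] [Nonempty ι] (μ : Measure α) (c : ι → α)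
    (hd : Pairwise (AEDisjoint μ on (voronoiCell c))) :
    ∫⁻ x, ⨅ i, edist x (c i) ^ 2 ∂μ =
      ⨅ (γ : Measure (α × α))
        (_ : γ.map Prod.fst = μ ∧
          γ.map Prod.snd = ∑ i, μ (voronoiCell c i) • Measure.dirac (c i)),
        ∫⁻ p, edist p.1 p.2 ^ 2 ∂γ := by
  have hmeas : Measurable fun x => ⨅ i, edist x (c i) ^ 2 :=
    Measurable.iInf fun i => (continuous_id.edist continuous_const).measurable.pow_const 2
  have hcells i : MeasurableSet (voronoiCell c i) := (isClosed_voronoiCell c i).measurableSet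
  refine le_antisymm (le_iInf₂ fun γ ⟨hfst, hsnd⟩ => ?_) ?_
  · have hγ : ∀ᵐ y ∂γ.map Prod.snd, y ∈ Set.range c := by
      rw [hsnd, ← Measure.sum_fintype]
      exact ae_mem_range_of_sum_dirac _ c
    simpa only [hfst] using lintegral_iInf_le_of_ae_mem_range hmeas hγ
  refine iInf₂_le_of_le (cellCoupling μ (voronoiCell c) c)
    ⟨cellCoupling_map_fst c (iUnion_voronoiCell c) hd fun i => (hcells i).nullMeasurableSet,
      by rw [cellCoupling_map_snd, Measure.sum_fintype]⟩ (le_of_eq ?_)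
  calc ∫⁻ p, edist p.1 p.2 ^ 2 ∂cellCoupling μ (voronoiCell c) c
      = ∑' i, ∫⁻ x in voronoiCell c i, edist x (c i) ^ 2 ∂μ := lintegral_cellCoupling ..
    _ = ∑' i, ∫⁻ x in voronoiCell c i, ⨅ j, edist x (c j) ^ 2 ∂μ :=
      tsum_congr fun i => setLIntegral_congr_fun (hcells i) fun _ hx =>
        (iInf_edist_sq_eq_of_mem_voronoiCell hx).symm
    _ = ∫⁻ x, ⨅ i, edist x (c i) ^ 2 ∂μ := by
      rw [← lintegral_sum_measure,
        ← Measure.restrict_iUnion_ae hd fun i => (hcells i).nullMeasurableSet,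
        iUnion_voronoiCell, Measure.restrict_univ]

variable {N nx : ℕ}

lemma Spi_eq_voronoiCell (Xhat : E N nx) : Spi Xhat = voronoiCell (permute · Xhat) := by
  ext π x
  simp only [Spi, voronoiCell, Set.mem_ofPred_eq, dist_eq_norm]
  exact forall_congr' fun _ => pow_le_pow_iff_left₀ (norm_nonneg _) (norm_nonneg _) two_ne_zero

lemma permute_left_injective {Xhat : E N nx}
    (hdist : ∀ i j : Fin N, i ≠ j → (fun k => Xhat (i, k)) ≠ (fun k => Xhat (j, k))) :
    Function.Injective (permute · Xhat) := fun _ _ h =>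
  Equiv.ext fun i => by_contra fun hne =>
    hdist _ _ hne (funext fun k => congrArg (fun v : E N nx => v (i, k)) h)

theorem stmt5_general {N nx : ℕ} (μ : Measure (E N nx))
    (hac : μ ≪ volume)
    (Xhat : E N nx)
    (hdist : ∀ i j : Fin N, i ≠ j → (fun k => Xhat (i, k)) ≠ (fun k => Xhat (j, k))) :
    ∫⁻ x, ospaE x Xhat ∂μ =
      W2sq μ (∑ π : Equiv.Perm (Fin N), μ (Spi Xhat π) • Measure.dirac (permute π Xhat)) := by
  have hcost (x y : E N nx) : (‖x - y‖₊ : ℝ≥0∞) = edist x y := (edist_eq_enorm_sub x y).symm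
  simp only [ospaE, W2sq, hcost, Spi_eq_voronoiCell]
  exact lintegral_iInf_edist_sq_eq_iInf_coupling μ _
    (pairwise_aedisjoint_voronoiCell hac (permute_left_injective hdist))

/-- Theorem 1: for absolutely continuous `μ` with finite second moment and `Xhat` with
pairwise distinct blocks, the MOSPA equals the squared 2-Wasserstein distance between
`μ` and the induced discrete measure `ν = Σ_π μ(S_π) δ_{π(Xhat)}`. -/
theorem stmt5 {N nx : ℕ} (μ : Measure (E N nx)) [IsProbabilityMeasure μ]
    (hac : μ ≪ volume) (hsec : ∫⁻ x, (‖x‖₊ : ℝ≥0∞) ^ 2 ∂μ < ⊤)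
    (Xhat : E N nx)
    (hdist : ∀ i j : Fin N, i ≠ j → (fun k => Xhat (i, k)) ≠ (fun k => Xhat (j, k))) :
    ∫⁻ x, ospaE x Xhat ∂μ =
      W2sq μ (∑ π : Equiv.Perm (Fin N), μ (Spi Xhat π) • Measure.dirac (permute π Xhat)) :=
  stmt5_general μ hac Xhat hdist
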